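/- arXiv:1411.0210 — 4 statements merged into one kernel-verified Lean document; each statement's English description precedes it below -/
import Mathlib

section
/- Let A be a symmetric n×n real matrix, A^L its associated Laplacian (off-diagonal entries -a_{ij}, diagonal entry i equal to the sum of a_{ij} over j ≠ i), and M = S·A^L·T with S, T as defined. If y is an eigenvector of A^L with eigenvalue α and y is orthogonal to the all-ones vector, then S·y is a nonzero eigenvector of M with eigenvalue α. -/
open Matrix Finset

/-- The (n)×(n+1) difference matrix: `S i i = -1`, `S i (i+1) = 1`, else `0`. -/
noncomputable def Smat (n : ℕ) : Matrix (Fin n) (Fin (n + 1)) ℝ :=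
  Matrix.of fun i j => if (j : ℕ) = (i : ℕ) then -1 else if (j : ℕ) = (i : ℕ) + 1 then 1 else 0

/-- The (n+1)×n cumulative-sum matrix: `T i j = 1` iff `j < i`. -/
noncomputable def Tmat (n : ℕ) : Matrix (Fin (n + 1)) (Fin n) ℝ :=
  Matrix.of fun i j => if (j : ℕ) < (i : ℕ) then 1 else 0

/-- The Laplacian associated with a symmetric matrix `A`:
off-diagonal entries `-A i j`, diagonal entry `∑_{k ≠ i} A i k`. -/
noncomputable def lap {m : Type*} [Fintype m] [DecidableEq m] (A : Matrix m m ℝ) :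
    Matrix m m ℝ :=
  Matrix.of fun i j => if i = j then ∑ k ∈ Finset.univ.filter (fun k => k ≠ i), A i k else -A i j

lemma S_mulVec (n : ℕ) (z : Fin (n + 1) → ℝ) (i : Fin n) :
    (Smat n).mulVec z i = z i.succ - z i.castSucc := by
  simp only [Smat, mulVec, dotProduct, of_apply]
  have key : ∀ j : Fin (n+1),
      (if (j : ℕ) = (i : ℕ) then (-1:ℝ) else if (j : ℕ) = (i : ℕ) + 1 then 1 else 0) * z j
      = (if j = i.succ then z j else 0) - (if j = i.castSucc then z j else 0) := by
    intro j
    have h1 : (j = i.succ) ↔ (j : ℕ) = (i : ℕ) + 1 := by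
      constructor <;> intro h
      · subst h; simp
      · exact Fin.ext (by simpa using h)
    have h2 : (j = i.castSucc) ↔ (j : ℕ) = (i : ℕ) := by
      constructor <;> intro h
      · subst h; simp
      · exact Fin.ext (by simpa using h)
    by_cases hc : (j : ℕ) = (i : ℕ)
    · simp [hc, h1, h2]
    · by_cases hs : (j : ℕ) = (i : ℕ) + 1 <;> simp [hc, hs, h1, h2]
  rw [Finset.sum_congr rfl fun j _ => key j, Finset.sum_sub_distrib]
  simp

lemma TS_mulVec (n : ℕ) (z : Fin (n + 1) → ℝ) (i : Fin (n + 1)) :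
    (Tmat n).mulVec ((Smat n).mulVec z) i = z i - z 0 := by
  simp only [Tmat, mulVec, dotProduct, of_apply]
  have hrw : ∀ j : Fin n, (if (j:ℕ) < (i:ℕ) then (1:ℝ) else 0) * (∑ k, Smat n j k * z k)
      = if (j:ℕ) < (i:ℕ) then (z j.succ - z j.castSucc) else 0 := by
    intro j
    rw [show (∑ k, Smat n j k * z k) = (Smat n).mulVec z j from rfl, S_mulVec]
    split_ifs <;> ring
  rw [Finset.sum_congr rfl fun j _ => hrw j]
  set f : ℕ → ℝ := fun j => if h : j < n + 1 then z ⟨j, h⟩ else 0 with hf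
  have hsum : ∑ j : Fin n, (if (j:ℕ) < (i:ℕ) then (z j.succ - z j.castSucc) else 0)
      = ∑ j ∈ Finset.range (i : ℕ), (f (j+1) - f j) := by
    have key : ∀ j : Fin n, (if (j:ℕ) < (i:ℕ) then (z j.succ - z j.castSucc) else 0)
        = (fun k => if k < (i:ℕ) then (f (k+1) - f k) else 0) (j : ℕ) := by
      intro j
      simp only [hf]
      rw [dif_pos (Nat.succ_lt_succ j.isLt), dif_pos (Nat.lt_succ_of_lt j.isLt)]
      rfl
    rw [Finset.sum_congr rfl fun j _ => key j,
      Fin.sum_univ_eq_sum_range (fun k => if k < (i:ℕ) then (f (k+1) - f k) else 0) n,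
      ← Finset.sum_filter]
    congr 1
    ext j
    simp only [Finset.mem_filter, Finset.mem_range]
    constructor
    · exact fun h => h.2
    · intro h; exact ⟨lt_of_lt_of_le h (Nat.lt_succ_iff.mp i.isLt), h⟩
  rw [hsum, Finset.sum_range_sub]
  simp only [hf]
  rw [dif_pos i.isLt, dif_pos (Nat.succ_pos n), Fin.eta]
  rfl

lemma lap_mulVec_one {m : Type*} [Fintype m] [DecidableEq m] (A : Matrix m m ℝ) :
    (lap A).mulVec (fun _ => (1:ℝ)) = 0 := by
  funext i
  simp only [lap, mulVec, dotProduct, of_apply, mul_one, Pi.zero_apply]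
  rw [Fintype.sum_eq_add_sum_compl i]
  have hne : ∀ j ∈ ({i}ᶜ : Finset m),
      (if i = j then ∑ k ∈ Finset.univ.filter (fun k => k ≠ i), A i k else -A i j) = -A i j := by
    intro j hj
    rw [if_neg]
    intro h; subst h
    simp at hj
  have hcompl : ({i}ᶜ : Finset m) = Finset.univ.filter (fun k => k ≠ i) := by
    ext j; simp [eq_comm]
  rw [Finset.sum_congr rfl hne, hcompl, Finset.sum_neg_distrib, if_pos rfl, add_neg_cancel]

theorem eigvec_transfer_S (n : ℕ) (A : Matrix (Fin (n + 1)) (Fin (n + 1)) ℝ)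
    (hA : A.IsSymm) (y : Fin (n + 1) → ℝ) (α : ℝ)
    (hy : y ≠ 0) (hev : (lap A).mulVec y = α • y) (hperp : ∑ i, y i = 0) :
    (Smat n).mulVec y ≠ 0 ∧
      (Smat n * lap A * Tmat n).mulVec ((Smat n).mulVec y) = α • (Smat n).mulVec y := by
  constructor
  · intro h0
    apply hy
    have hconst : ∀ i : Fin (n+1), y i = y 0 := by
      intro i
      induction i using Fin.induction with
      | zero => rfl
      | succ j ih =>
        have h := congrFun h0 j
        rw [S_mulVec] at h
        simp only [Pi.zero_apply] at h
        have h' : y j.succ = y j.castSucc := by linarith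
        rw [h']; exact ih
    have hsum : ∑ i : Fin (n+1), y i = (n+1 : ℝ) * y 0 := by
      rw [Finset.sum_congr rfl fun i _ => hconst i]
      simp [mul_comm]
    rw [hperp] at hsum
    rcases mul_eq_zero.mp hsum.symm with h | h
    · exact absurd h (by positivity)
    · funext i
      rw [hconst i, h]; rfl
  · have hTS : (Tmat n).mulVec ((Smat n).mulVec y) = y - y 0 • (fun _ => (1:ℝ)) := by
      funext i
      rw [TS_mulVec]
      simp
    rw [Matrix.mul_assoc, ← Matrix.mulVec_mulVec, ← Matrix.mulVec_mulVec, hTS]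
    have h1 : (lap A).mulVec (y - y 0 • (fun _ => (1:ℝ))) = α • y := by
      rw [Matrix.mulVec_sub, hev, Matrix.mulVec_smul, lap_mulVec_one]
      simp
    rw [h1, Matrix.mulVec_smul]
end

section
/- Let A be a symmetric n×n real matrix with Laplacian A^L, and M = S·A^L·T. If y is an eigenvector of M with eigenvalue α, then there exists an eigenvector x of A^L for eigenvalue α with x ⟂ 1 and y = S·x. -/
open Matrix Finset

lemma Smat_apply' (n : ℕ) (i : Fin n) (j : Fin (n + 1)) :
    Smat n i j = (if j = i.succ then (1 : ℝ) else 0) - (if j = i.castSucc then 1 else 0) := by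
  simp only [Smat, Matrix.of_apply, Fin.ext_iff, Fin.val_succ, Fin.coe_castSucc]
  split_ifs <;> first | ring1 | (exfalso; omega)

lemma Smat_dot (n : ℕ) (i : Fin n) (u : Fin (n + 1) → ℝ) :
    ∑ j, Smat n i j * u j = u i.succ - u i.castSucc := by
  simp only [Smat_apply', sub_mul, ite_mul, one_mul, zero_mul]
  rw [Finset.sum_sub_distrib]
  simp

lemma Smat_mulVec (n : ℕ) (u : Fin (n + 1) → ℝ) (i : Fin n) :
    (Smat n).mulVec u i = u i.succ - u i.castSucc := by
  simp only [Matrix.mulVec, dotProduct]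
  exact Smat_dot n i u

lemma Smat_mul_Tmat (n : ℕ) : Smat n * Tmat n = 1 := by
  ext i k
  rw [Matrix.mul_apply]
  rw [show ∑ j, Smat n i j * Tmat n j k = Tmat n i.succ k - Tmat n i.castSucc k from
    Smat_dot n i _]
  simp only [Tmat, Matrix.of_apply, Matrix.one_apply, Fin.val_succ, Fin.coe_castSucc,
    Fin.ext_iff]
  split_ifs <;> first | ring1 | (exfalso; omega)

lemma const_of_Smat_mulVec_eq_zero (n : ℕ) (u : Fin (n + 1) → ℝ)
    (h : (Smat n).mulVec u = 0) : ∀ j, u j = u 0 := by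
  intro j
  induction j using Fin.induction with
  | zero => rfl
  | succ i ih =>
    have h1 := congrFun h i
    rw [Smat_mulVec] at h1
    have h2 : u i.succ = u i.castSucc := by
      have : u i.succ - u i.castSucc = 0 := h1
      linarith
    rw [h2, ih]

lemma eq_zero_of_Smat (n : ℕ) (u : Fin (n + 1) → ℝ)
    (h : (Smat n).mulVec u = 0) (hs : ∑ i, u i = 0) : u = 0 := by
  have hc := const_of_Smat_mulVec_eq_zero n u h
  have hsum : ((n : ℝ) + 1) * u 0 = 0 := by
    have : ∑ i : Fin (n + 1), u i = ∑ _i : Fin (n + 1), u 0 :=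
      Finset.sum_congr rfl fun j _ => hc j
    rw [this] at hs
    simpa [Finset.sum_const, Finset.card_univ, mul_comm] using hs
  have h0 : u 0 = 0 := by
    have hne : ((n : ℝ) + 1) ≠ 0 := by positivity
    exact (mul_eq_zero.mp hsum).resolve_left hne
  funext j
  rw [hc j, h0]
  rfl

lemma lap_row_sum {m : Type*} [Fintype m] [DecidableEq m] (A : Matrix m m ℝ) (i : m) :
    ∑ j, lap A i j = 0 := by
  rw [← Finset.add_sum_erase _ _ (Finset.mem_univ i)]
  simp only [lap, Matrix.of_apply, if_pos rfl]
  have h1 : ∑ j ∈ Finset.univ.erase i, (if i = j then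
      (∑ k ∈ Finset.univ.filter (fun k => k ≠ i), A i k) else -A i j)
      = ∑ j ∈ Finset.univ.erase i, -A i j := by
    apply Finset.sum_congr rfl
    intro j hj
    rw [if_neg (Ne.symm (Finset.mem_erase.mp hj).1)]
  rw [h1, Finset.filter_ne', Finset.sum_neg_distrib]
  simp

lemma lap_col_sum {m : Type*} [Fintype m] [DecidableEq m] (A : Matrix m m ℝ)
    (hA : A.IsSymm) (j : m) : ∑ i, lap A i j = 0 := by
  have key : ∀ i, lap A i j = lap A j i := by
    intro i
    by_cases h : i = j
    · subst h; rfl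
    · simp only [lap, Matrix.of_apply, if_neg h, if_neg (Ne.symm h)]
      rw [hA.apply i j]
  rw [Finset.sum_congr rfl fun i _ => key i]
  exact lap_row_sum A j

lemma lap_mulVec_const {m : Type*} [Fintype m] [DecidableEq m] (A : Matrix m m ℝ) (c : ℝ) :
    (lap A).mulVec (fun _ => c) = 0 := by
  funext i
  simp only [Matrix.mulVec, dotProduct, Pi.zero_apply]
  rw [← Finset.sum_mul, lap_row_sum, zero_mul]

lemma sum_lap_mulVec {m : Type*} [Fintype m] [DecidableEq m] (A : Matrix m m ℝ)
    (hA : A.IsSymm) (v : m → ℝ) : ∑ i, (lap A).mulVec v i = 0 := by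
  simp only [Matrix.mulVec, dotProduct]
  rw [Finset.sum_comm]
  apply Finset.sum_eq_zero
  intro j _
  rw [← Finset.sum_mul, lap_col_sum A hA, zero_mul]

theorem eigvec_transfer_back (n : ℕ) (A : Matrix (Fin (n + 1)) (Fin (n + 1)) ℝ)
    (hA : A.IsSymm) (y : Fin n → ℝ) (α : ℝ)
    (hy : y ≠ 0) (hev : (Smat n * lap A * Tmat n).mulVec y = α • y) :
    ∃ x : Fin (n + 1) → ℝ, x ≠ 0 ∧ (lap A).mulVec x = α • x ∧
      (∑ i, x i = 0) ∧ y = (Smat n).mulVec x := by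
  set z := (Tmat n).mulVec y with hz
  set c := (∑ i, z i) / ((n : ℝ) + 1) with hc
  set x := z - (fun _ => c) with hxdef
  -- S z = y
  have hSz : (Smat n).mulVec z = y := by
    rw [hz, Matrix.mulVec_mulVec, Smat_mul_Tmat, Matrix.one_mulVec]
  -- S (const c) = 0
  have hSc : (Smat n).mulVec (fun _ => c) = 0 := by
    funext i
    rw [Smat_mulVec]
    simp
  have hSx : (Smat n).mulVec x = y := by
    rw [hxdef, Matrix.mulVec_sub, hSz, hSc, sub_zero]
  have hxsum : ∑ i, x i = 0 := by
    have hne : ((n : ℝ) + 1) ≠ 0 := by positivity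
    simp only [hxdef, Pi.sub_apply]
    rw [Finset.sum_sub_distrib, Finset.sum_const, Finset.card_univ]
    simp only [Fintype.card_fin, hc]
    rw [nsmul_eq_mul]
    push_cast
    field_simp
    ring
  have hlapx : (lap A).mulVec x = (lap A).mulVec z := by
    rw [hxdef, Matrix.mulVec_sub, lap_mulVec_const, sub_zero]
  -- the eigen equation
  have heq : (lap A).mulVec x = α • x := by
    set w := (lap A).mulVec x - α • x with hw
    have hSw : (Smat n).mulVec w = 0 := by
      rw [hw, Matrix.mulVec_sub, hlapx]
      have h1 : (Smat n).mulVec ((lap A).mulVec z) = α • y := by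
        rw [hz, Matrix.mulVec_mulVec, Matrix.mulVec_mulVec, ← hev, Matrix.mul_assoc]
      have h2 : (Smat n).mulVec (α • x) = α • y := by
        rw [Matrix.mulVec_smul, hSx]
      rw [h1, h2, sub_self]
    have hws : ∑ i, w i = 0 := by
      simp only [hw, Pi.sub_apply, Pi.smul_apply, smul_eq_mul]
      rw [Finset.sum_sub_distrib, ← Finset.mul_sum]
      rw [sum_lap_mulVec A hA, hxsum, mul_zero, sub_zero]
    have := eq_zero_of_Smat n w hSw hws
    rw [hw] at this
    exact sub_eq_zero.mp this
  exact ⟨x, by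
    intro hx0
    apply hy
    rw [← hSx, hx0, Matrix.mulVec_zero], heq, hxsum, hSx.symm⟩
end

section
/- Let A be a symmetric n×n real matrix and M = S·A^L·T. Suppose a_{ij} > a_{ik} whenever j < k < i, and a_{ij} < a_{ik} whenever i < j < k. Then every off-diagonal entry of M is strictly positive. -/
open Matrix Finset

/-! Row `i` of `S * Aᴸ` is row `i + 1` minus row `i` of `Aᴸ`, and `T` sums columns `q > j`, so
`M i j = ∑_{q > j} (Aᴸ (i+1) q - Aᴸ i q)`. Off the diagonal of `Aᴸ` the summand is
`a q i - a q (i+1)` (by symmetry), which is positive for `q > i + 1` and negative for `q < i` by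
the two monotonicity hypotheses. For `i < j` every summand is positive; for `j < i` the zero row
sums of the Laplacian turn the sum into minus the sum over `q ≤ j`, whose summands are negative. -/

section Laplacian

variable {m : Type*} [Fintype m] [DecidableEq m] (A : Matrix m m ℝ)

lemma lap_apply_of_ne {p q : m} (h : p ≠ q) : lap A p q = -A p q := by
  simp [lap, h]

lemma sum_lap_row (p : m) : ∑ q, lap A p q = 0 := by
  rw [← add_sum_erase _ _ (mem_univ p),
    sum_congr rfl fun q hq => lap_apply_of_ne A (ne_of_mem_erase hq).symm]
  simp [lap, filter_ne']

end Laplacian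

lemma Smat_mul_apply {n : ℕ} {α : Type*} (B : Matrix (Fin (n + 1)) α ℝ) (i : Fin n) (q : α) :
    (Smat n * B) i q = B i.succ q - B i.castSucc q := by
  have hS : ∀ p : Fin (n + 1), Smat n i p =
      (if p = i.succ then 1 else 0) - (if p = i.castSucc then 1 else 0) := by
    intro p
    simp only [Smat, of_apply, Fin.ext_iff, Fin.val_succ, Fin.val_castSucc]
    split_ifs <;> first | omega | ring
  simp [mul_apply, hS, sub_mul, sum_sub_distrib]

lemma mul_Tmat_apply {n : ℕ} {α : Type*} (B : Matrix α (Fin (n + 1)) ℝ) (p : α) (j : Fin n) :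
    (B * Tmat n) p j = ∑ q ∈ univ.filter fun q : Fin (n + 1) => (j : ℕ) < q, B p q := by
  simp [mul_apply, Tmat, sum_filter]

section RowDifference

variable {n : ℕ} {A : Matrix (Fin (n + 1)) (Fin (n + 1)) ℝ} {i : Fin n} {q : Fin (n + 1)}

lemma lap_succ_sub_lap_castSucc_of_ne (h₀ : q ≠ i.castSucc) (h₁ : q ≠ i.succ) :
    lap A i.succ q - lap A i.castSucc q = A i.castSucc q - A i.succ q := by
  rw [lap_apply_of_ne A h₁.symm, lap_apply_of_ne A h₀.symm]
  ring

lemma lap_succ_sub_lap_castSucc_pos (hA : A.IsSymm)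
    (h1 : ∀ i j k : Fin (n + 1), (j : ℕ) < k → (k : ℕ) < i → A i k < A i j)
    (hq : (i : ℕ) + 1 < q) : 0 < lap A i.succ q - lap A i.castSucc q := by
  rw [lap_succ_sub_lap_castSucc_of_ne (by grind) (by grind), hA.apply q, hA.apply q, sub_pos]
  exact h1 q i.castSucc i.succ (by simp) (by simpa using hq)

lemma lap_succ_sub_lap_castSucc_neg (hA : A.IsSymm)
    (h2 : ∀ i j k : Fin (n + 1), (i : ℕ) < j → (j : ℕ) < k → A i j < A i k)
    (hq : (q : ℕ) < i) : lap A i.succ q - lap A i.castSucc q < 0 := by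
  rw [lap_succ_sub_lap_castSucc_of_ne (by grind) (by grind), hA.apply q, hA.apply q, sub_neg]
  exact h2 q i.castSucc i.succ (by simpa using hq) (by simp)

end RowDifference

theorem offdiag_pos (n : ℕ) (A : Matrix (Fin (n + 1)) (Fin (n + 1)) ℝ)
    (hA : A.IsSymm)
    (h1 : ∀ i j k : Fin (n + 1), (j : ℕ) < k → (k : ℕ) < i → A i k < A i j)
    (h2 : ∀ i j k : Fin (n + 1), (i : ℕ) < j → (j : ℕ) < k → A i j < A i k) :
    ∀ i j : Fin n, i ≠ j → 0 < (Smat n * lap A * Tmat n) i j := by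
  intro i j hij
  simp only [mul_Tmat_apply, Smat_mul_apply]
  rcases Nat.lt_or_gt_of_ne (Fin.val_ne_of_ne hij) with hij | hji
  · refine sum_pos (fun q hq => lap_succ_sub_lap_castSucc_pos hA h1 ?_) ⟨Fin.last n, by simp⟩
    have := (mem_filter.1 hq).2
    omega
  · have hrow : ∑ q, (lap A i.succ q - lap A i.castSucc q) = 0 := by
      simp only [sum_sub_distrib, sum_lap_row, sub_self]
    rw [← sum_filter_add_sum_filter_not univ fun q : Fin (n + 1) => (j : ℕ) < q] at hrow
    rw [eq_neg_of_add_eq_zero_left hrow, neg_pos]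
    refine sum_neg (fun q hq => lap_succ_sub_lap_castSucc_neg hA h2 ?_) ⟨0, by simp⟩
    have := (mem_filter.1 hq).2
    omega
end

section
/- Let D be the n×n matrix with D[i,j] = |i-j|. Then D satisfies: D[i,j] > D[i,k] whenever j < k < i, and D[i,j] < D[i,k] whenever i < j < k. Consequently the matrix M = S·D^L·T (with S the difference matrix, T the cumulative-sum matrix, and D^L the Laplacian of D) has all off-diagonal entries strictly positive. -/
open Matrix Finset

lemma lap_rowsum {m : Type*} [Fintype m] [DecidableEq m] (A : Matrix m m ℝ) (p : m) :
    ∑ q, lap A p q = 0 := by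
  have hset : Finset.univ.filter (fun k => k ≠ p) = Finset.univ \ {p} := by
    ext x; simp
  simp only [lap, Matrix.of_apply]
  rw [Finset.sum_eq_add_sum_sdiff_singleton_of_mem (Finset.mem_univ p)
      (fun q => if p = q then (∑ k ∈ Finset.univ.filter (fun k => k ≠ p), A p k) else -A p q),
    if_pos rfl, hset]
  rw [Finset.sum_congr rfl (fun q hq => if_neg (by
      rw [Finset.mem_sdiff, Finset.mem_singleton] at hq
      exact fun h => hq.2 h.symm))]
  simp

lemma smat_mul_row (n : ℕ) (L : Matrix (Fin (n+1)) (Fin (n+1)) ℝ) (i : Fin n) (q : Fin (n+1)) :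
    (Smat n * L) i q = L i.succ q - L i.castSucc q := by
  simp only [Matrix.mul_apply, Smat, Matrix.of_apply]
  have key : ∀ p : Fin (n+1),
      (if (p : ℕ) = (i : ℕ) then (-1:ℝ) else if (p : ℕ) = (i : ℕ) + 1 then 1 else 0) * L p q
      = (if p = i.castSucc then -L p q else 0) + (if p = i.succ then L p q else 0) := by
    intro p
    split_ifs <;> simp_all [Fin.ext_iff] <;> first | ring | omega
  rw [Finset.sum_congr rfl (fun p _ => key p), Finset.sum_add_distrib,
    Finset.sum_ite_eq' Finset.univ i.castSucc (fun p => -L p q),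
    Finset.sum_ite_eq' Finset.univ i.succ (fun p => L p q)]
  simp; ring

lemma mval (n : ℕ) (L : Matrix (Fin (n+1)) (Fin (n+1)) ℝ) (i j : Fin n) :
    (Smat n * L * Tmat n) i j
      = ∑ q ∈ Finset.univ.filter (fun q : Fin (n+1) => (j:ℕ) < (q:ℕ)),
          (L i.succ q - L i.castSucc q) := by
  rw [Matrix.mul_apply]
  simp only [smat_mul_row, Tmat, Matrix.of_apply, mul_ite, mul_one, mul_zero]
  exact (Finset.sum_filter _ _).symm

theorem path_dist_strict_monotone (n : ℕ) (hn : 1 ≤ n)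
    (D : Matrix (Fin (n + 1)) (Fin (n + 1)) ℝ)
    (hD : ∀ i j : Fin (n + 1), D i j = |(i : ℝ) - (j : ℝ)|) :
    (∀ i j k : Fin (n + 1), (j : ℕ) < k → (k : ℕ) < i → D i k < D i j) ∧
    (∀ i j k : Fin (n + 1), (i : ℕ) < j → (j : ℕ) < k → D i j < D i k) ∧
    (∀ i j : Fin n, i ≠ j → 0 < (Smat n * lap D * Tmat n) i j) := by
  refine ⟨?_, ?_, ?_⟩
  · intro i j k hjk hki
    rw [hD, hD]
    have h1 : (j:ℝ) < (k:ℝ) := by exact_mod_cast hjk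
    have h2 : (k:ℝ) < (i:ℝ) := by exact_mod_cast hki
    rw [abs_of_pos (by linarith), abs_of_pos (by linarith)]
    linarith
  · intro i j k hij hjk
    rw [hD, hD]
    have h1 : (i:ℝ) < (j:ℝ) := by exact_mod_cast hij
    have h2 : (j:ℝ) < (k:ℝ) := by exact_mod_cast hjk
    rw [abs_of_neg (by linarith), abs_of_neg (by linarith)]
    linarith
  · intro i j hij
    rw [mval]
    rcases Nat.lt_or_ge (i:ℕ) (j:ℕ) with hlt | hge
    · -- i < j : each term in the filter sum is 1
      apply Finset.sum_pos
      · intro q hq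
        rw [Finset.mem_filter] at hq
        have hq' : (j:ℕ) < (q:ℕ) := hq.2
        have hne1 : ¬ i.succ = q := by
          intro h; apply absurd (congrArg Fin.val h); simp; omega
        have hne2 : ¬ i.castSucc = q := by
          intro h; apply absurd (congrArg Fin.val h); simp; omega
        simp only [lap, Matrix.of_apply, if_neg hne1, if_neg hne2]
        rw [hD, hD]
        have hc1 : ((i.succ : Fin (n+1)) : ℝ) = (i:ℕ) + 1 := by
          norm_cast
        have hc2 : ((i.castSucc : Fin (n+1)) : ℝ) = (i:ℕ) := by
          norm_cast
        rw [hc1, hc2]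
        have hcast : ((i:ℕ):ℝ) + 1 < ((q:ℕ):ℝ) := by exact_mod_cast (by omega : (i:ℕ)+1 < (q:ℕ))
        rw [abs_of_neg (by linarith), abs_of_neg (by linarith)]
        linarith
      · refine ⟨Fin.last n, ?_⟩
        rw [Finset.mem_filter]
        exact ⟨Finset.mem_univ _, by simp⟩
    · -- j < i
      have hgt : (j:ℕ) < (i:ℕ) := by
        have hne : (i:ℕ) ≠ (j:ℕ) := fun h => hij (Fin.ext h)
        omega
      have hzero : ∑ q, (lap D i.succ q - lap D i.castSucc q) = 0 := by
        rw [Finset.sum_sub_distrib, lap_rowsum, lap_rowsum, sub_zero]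
      rw [← Finset.sum_filter_add_sum_filter_not Finset.univ
        (fun q : Fin (n+1) => (j:ℕ) < (q:ℕ))] at hzero
      have hB : 0 < ∑ q ∈ Finset.univ.filter (fun q : Fin (n+1) => ¬ (j:ℕ) < (q:ℕ)),
          (lap D i.castSucc q - lap D i.succ q) := by
        apply Finset.sum_pos
        · intro q hq
          rw [Finset.mem_filter] at hq
          have hq' : (q:ℕ) ≤ (j:ℕ) := by omega
          have hne1 : ¬ i.succ = q := by
            intro h; apply absurd (congrArg Fin.val h); simp; omega
          have hne2 : ¬ i.castSucc = q := by
            intro h; apply absurd (congrArg Fin.val h); simp; omega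
          simp only [lap, Matrix.of_apply, if_neg hne1, if_neg hne2]
          rw [hD, hD]
          have hc1 : ((i.succ : Fin (n+1)) : ℝ) = (i:ℕ) + 1 := by norm_cast
          have hc2 : ((i.castSucc : Fin (n+1)) : ℝ) = (i:ℕ) := by norm_cast
          rw [hc1, hc2]
          have hcast : ((q:ℕ):ℝ) < ((i:ℕ):ℝ) := by exact_mod_cast (by omega : (q:ℕ) < (i:ℕ))
          rw [abs_of_pos (by linarith), abs_of_pos (by linarith)]
          linarith
        · refine ⟨(0 : Fin (n+1)), ?_⟩
          rw [Finset.mem_filter]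
          simp
      rw [Finset.sum_sub_distrib] at hB
      have hA := hzero
      rw [Finset.sum_sub_distrib, Finset.sum_sub_distrib] at hA
      rw [Finset.sum_sub_distrib]
      linarith
end
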